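/- arXiv:1908.03751 — 7 statements merged into one kernel-verified Lean document; each statement's English description precedes it below -/
import Mathlib

section
/- Let b ≥ 2 and ρ ≥ 1 be integers, and let Λ = (b-1, b-1, ..., b-1) with ρ entries. Then the number of Λ-restricted ρ-colored b-ary partitions of n equals the binomial coefficient C(n+ρ-1, ρ-1) for every n ≥ 0; in particular this number is independent of the base b. -/
/-!
A colour class of a partition with every multiplicity at most `b - 1` is a base-`b` digit
expansion, so by uniqueness of base-`b` representations it is determined by its value. A
partition of `n` is therefore the same as a `ρ`-tuple of natural numbers summing to `n`,
and stars and bars counts these.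
-/

/-- The number of `Λ`-restricted `ρ`-colored `b`-ary partitions of `n`:
representations are counting functions `c` of finite support, where `c (j, r)`
is the number of parts `b ^ j` carrying color `r`, subject to `c (j, r) ≤ Λ r`,
and the total sum of all parts is `n`. -/
noncomputable def coloredCount (b ρ : ℕ) (Λ : Fin ρ → ℕ) (n : ℕ) : ℕ :=
  Nat.card {c : ℕ × Fin ρ →₀ ℕ //
    (∀ j r, c (j, r) ≤ Λ r) ∧ (c.sum fun p m => m * b ^ p.1) = n}

namespace Finsupp

def ofDigits (b : ℕ) (d : ℕ →₀ ℕ) : ℕ := d.sum fun j m => m * b ^ j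

variable {b : ℕ}

lemma ofDigits_add (d e : ℕ →₀ ℕ) : ofDigits b (d + e) = ofDigits b d + ofDigits b e :=
  sum_add_index' (fun _ => zero_mul _) fun _ _ _ => add_mul _ _ _

lemma ofDigits_single (j m : ℕ) : ofDigits b (single j m) = m * b ^ j :=
  sum_single_index (zero_mul _)

lemma ofDigits_embDomain_succ (d : ℕ →₀ ℕ) :
    ofDigits b (d.embDomain (addRightEmbedding 1)) = b * ofDigits b d := by
  simp only [ofDigits, sum_embDomain, mul_sum, addRightEmbedding_apply, pow_succ]
  exact sum_congr fun _ _ => by ring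

lemma ofDigits_toFinsupp (l : List ℕ) : ofDigits b l.toFinsupp = Nat.ofDigits b l := by
  induction l with
  | nil => simp [ofDigits]
  | cons x l ih =>
    rw [List.toFinsupp_cons_eq_single_add_embDomain, ofDigits_add, ofDigits_single,
      ofDigits_embDomain_succ, ih, Nat.ofDigits_cons, pow_zero, mul_one]

lemma toFinsupp_ofFn_of_support_subset {d : ℕ →₀ ℕ} {N : ℕ} (h : d.support ⊆ Finset.range N) :
    (List.ofFn fun i : Fin N => d i).toFinsupp = d := by
  ext j
  rw [List.toFinsupp_apply, List.getD_eq_getElem?_getD, List.getElem?_ofFn]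
  by_cases hj : j < N
  · simp [hj]
  · simpa [hj, eq_comm] using mt (@h j) (by simpa using hj)

lemma ofDigits_injOn (hb : 1 < b) : Set.InjOn (ofDigits b) {d | ∀ j, d j < b} := by
  intro d (hd : ∀ j, d j < b) e (he : ∀ j, e j < b) hde
  obtain ⟨N, hN⟩ := (d.support ∪ e.support).exists_nat_subset_range
  have hd' := toFinsupp_ofFn_of_support_subset (Finset.union_subset_left hN)
  have he' := toFinsupp_ofFn_of_support_subset (Finset.union_subset_right hN)
  rw [← hd', ← he', ofDigits_toFinsupp, ofDigits_toFinsupp] at hde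
  rw [← hd', ← he', Nat.ofDigits_inj_of_len_eq hb (by simp) (by simp [List.mem_ofFn, hd])
    (by simp [List.mem_ofFn, he]) hde]

lemma ofDigits_toFinsupp_digits (b n : ℕ) : ofDigits b (Nat.digits b n).toFinsupp = n := by
  rw [ofDigits_toFinsupp, Nat.ofDigits_digits]

lemma toFinsupp_digits_lt (hb : 1 < b) (n j : ℕ) : (Nat.digits b n).toFinsupp j < b := by
  rw [List.toFinsupp_apply, Nat.getD_digits n j hb]
  exact Nat.mod_lt _ (by omega)

def digitsEquiv (hb : 1 < b) : {d : ℕ →₀ ℕ // ∀ j, d j < b} ≃ ℕ where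
  toFun d := ofDigits b d
  invFun n := ⟨(Nat.digits b n).toFinsupp, toFinsupp_digits_lt hb n⟩
  left_inv d := Subtype.ext <| ofDigits_injOn hb (toFinsupp_digits_lt hb _) d.2
    (ofDigits_toFinsupp_digits b _)
  right_inv := ofDigits_toFinsupp_digits b

variable {α ι M : Type*} [Fintype ι] [Zero M]

noncomputable def colorClassesEquiv : (α × ι →₀ M) ≃ (ι → α →₀ M) :=
  (equivCongrLeft (Equiv.prodComm α ι)).trans (curryEquiv.trans equivFunOnFinite)

@[simp]
lemma colorClassesEquiv_apply (c : α × ι →₀ M) (r : ι) (j : α) :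
    colorClassesEquiv c r j = c (j, r) := by
  simp [colorClassesEquiv, equivCongrLeft_apply]

lemma sum_eq_sum_colorClassesEquiv {N : Type*} [AddCommMonoid N] (c : α × ι →₀ M)
    (g : α → M → N) : (c.sum fun p m => g p.1 m) = ∑ r, (colorClassesEquiv c r).sum g := by
  calc (c.sum fun p m => g p.1 m)
      = (equivMapDomain (Equiv.prodComm α ι) c).curry.sum fun _ d => d.sum g := by
        rw [sum_curry_index, sum_equivMapDomain]; rfl
    _ = ∑ r, (colorClassesEquiv c r).sum g := sum_fintype _ _ fun _ => sum_zero_index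

end Finsupp

open Finsupp in
lemma coloredCount_eq_natCard_sum_eq {b : ℕ} (hb : 1 < b) (ρ n : ℕ) :
    coloredCount b ρ (fun _ => b - 1) n = Nat.card {f : Fin ρ → ℕ // ∑ r, f r = n} := by
  let E : {c : ℕ × Fin ρ →₀ ℕ // ∀ j r, c (j, r) < b} ≃ (Fin ρ → ℕ) :=
    (colorClassesEquiv.subtypeEquiv fun c => by simp [forall_comm (α := ℕ)]).trans <|
      Equiv.subtypePiEquivPi.trans <| Equiv.piCongrRight fun _ => digitsEquiv hb
  have hE (c) : (c.1.sum fun p m => m * b ^ p.1) = ∑ r, E c r :=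
    sum_eq_sum_colorClassesEquiv c.1 fun j m => m * b ^ j
  refine Nat.card_congr <| (Equiv.subtypeEquivRight fun c => ?_).trans <|
    (Equiv.subtypeSubtypeEquivSubtypeInter (fun c => ∀ j r, c (j, r) < b)
      (fun c => (c.sum fun p m => m * b ^ p.1) = n)).symm.trans <|
    E.subtypeEquiv fun c => by rw [hE]
  simp only [Nat.le_sub_one_iff_lt (zero_lt_one.trans hb)]

lemma Nat.card_sum_eq_choose (ι : Type*) [Fintype ι] (n : ℕ) :
    Nat.card {f : ι → ℕ // ∑ i, f i = n} = (Fintype.card ι + n - 1).choose n := by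
  classical
  rw [← Nat.card_congr (Sym.equivNatSumOfFintype ι n), Sym.natCard_sym_eq_choose,
    Nat.card_eq_fintype_card]

/-- For `Λ = (b-1, …, b-1)` with `ρ` entries, the number of `Λ`-restricted
`ρ`-colored `b`-ary partitions of `n` is `C(n + ρ - 1, ρ - 1)`, independently of `b`. -/
theorem coloredCount_all_b_sub_one (b ρ : ℕ) (hb : 2 ≤ b) (hρ : 1 ≤ ρ) (n : ℕ) :
    coloredCount b ρ (fun _ => b - 1) n = (n + ρ - 1).choose (ρ - 1) := by
  rw [coloredCount_eq_natCard_sum_eq hb, Nat.card_sum_eq_choose, Fintype.card_fin, add_comm ρ]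
  exact Nat.choose_symm_of_eq_add (by omega)
end

section
/- For integers s, t ≥ 1, the 2-parameter generalized Stern polynomials satisfy the generating function identity Σ_{n≥1} ω_{s,t}(n;y,z) q^n = q · Π_{j≥0} (1 + y^{s^j} q^{2^j} + z^{t^j} q^{2^{j+1}}) as formal power series in q over the polynomial ring ℤ[y,z]. -/
/-!
Write `P_N(y, z; q) = ∏_{j<N} (1 + y^{s^j} q^{2^j} + z^{t^j} q^{2^{j+1}})`. Each factor arises
from the previous one by `y ↦ y^s, z ↦ z^t, q ↦ q^2`, so
`P_{N+1} = (1 + y q + z q^2) · P_N(y^s, z^t; q^2)`.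
Since `P_N(y^s, z^t; q^2)` has only even powers of `q`, the coefficient of `q^{2k}` resp.
`q^{2k+1}` on the right is exactly the odd resp. even step of the recursion, and induction on `N`
gives `[q^m] P_N = ω(m + 1)` for `m < 2^N`.
-/

open MvPolynomial

/-- Substitution `y ↦ y^s`, `z ↦ z^t` in `ℤ[y, z]`, where `y = X 0` and `z = X 1`. -/
noncomputable def subst (s t : ℕ) (p : MvPolynomial (Fin 2) ℤ) : MvPolynomial (Fin 2) ℤ :=
  aeval (fun i : Fin 2 => (X i : MvPolynomial (Fin 2) ℤ) ^ (if i = 0 then s else t)) p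

namespace SternPolynomial

local notation "R" => MvPolynomial (Fin 2) ℤ

variable (s t : ℕ)

noncomputable def substHom : R →+* R :=
  (aeval fun i : Fin 2 => (X i : R) ^ (if i = 0 then s else t)).toRingHom

theorem substHom_apply (p : R) : substHom s t p = subst s t p := rfl

theorem subst_one : subst s t (1 : R) = 1 := map_one _

theorem subst_X_zero : subst s t (X 0 : R) = X 0 ^ s := by
  simp [subst]

theorem subst_X_one : subst s t (X 1 : R) = X 1 ^ t := by
  simp [subst]

noncomputable def factor (j : ℕ) : PowerSeries R :=
  1 + PowerSeries.C ((X 0 : R) ^ s ^ j) * PowerSeries.X ^ 2 ^ j +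
    PowerSeries.C ((X 1 : R) ^ t ^ j) * PowerSeries.X ^ 2 ^ (j + 1)

/-- `F(y, z; q) ↦ F(y^s, z^t; q^2)`. -/
noncomputable def shift : PowerSeries R →+* PowerSeries R :=
  (PowerSeries.expand 2 two_ne_zero).toRingHom.comp (PowerSeries.map (substHom s t))

theorem coeff_shift_two_mul (F : PowerSeries R) (k : ℕ) :
    PowerSeries.coeff (2 * k) (shift s t F) = subst s t (PowerSeries.coeff k F) := by
  simp [shift, substHom_apply]

theorem coeff_shift_two_mul_add_one (F : PowerSeries R) (k : ℕ) :
    PowerSeries.coeff (2 * k + 1) (shift s t F) = 0 :=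
  PowerSeries.coeff_expand_of_not_dvd _ two_ne_zero _ (by omega)

theorem shift_factor (j : ℕ) : shift s t (factor s t j) = factor s t (j + 1) := by
  simp only [shift, factor, RingHom.comp_apply, map_add, map_one, map_mul, map_pow,
    PowerSeries.map_C, PowerSeries.map_X, AlgHom.toRingHom_eq_coe, RingHom.coe_coe,
    PowerSeries.expand_C, PowerSeries.expand_X, substHom_apply, subst_X_zero, subst_X_one,
    ← pow_mul, ← pow_succ']

theorem prod_factor_succ (N : ℕ) :
    ∏ j ∈ Finset.range (N + 1), factor s t j =
      factor s t 0 * shift s t (∏ j ∈ Finset.range N, factor s t j) := by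
  rw [Finset.prod_range_succ', map_prod, mul_comm]
  simp only [shift_factor]

theorem factor_zero_mul (F : PowerSeries R) :
    factor s t 0 * F = F + PowerSeries.C (X 0 : R) * (PowerSeries.X * F) +
      PowerSeries.C (X 1 : R) * (PowerSeries.X * (PowerSeries.X * F)) := by
  simp only [factor, pow_zero, pow_one, zero_add]
  ring

theorem coeff_X_mul_shift_two_mul (F : PowerSeries R) (k : ℕ) :
    PowerSeries.coeff (2 * k) (PowerSeries.X * shift s t F) = 0 := by
  cases k with
  | zero => exact PowerSeries.coeff_zero_X_mul _
  | succ k =>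
    rw [show 2 * (k + 1) = 2 * k + 1 + 1 by ring, PowerSeries.coeff_succ_X_mul,
      coeff_shift_two_mul_add_one]

theorem coeff_factor_zero_mul_shift_zero (F : PowerSeries R) :
    PowerSeries.coeff 0 (factor s t 0 * shift s t F) = subst s t (PowerSeries.coeff 0 F) := by
  simpa [factor_zero_mul] using coeff_shift_two_mul s t F 0

theorem coeff_factor_zero_mul_shift_two_mul_add_one (F : PowerSeries R) (k : ℕ) :
    PowerSeries.coeff (2 * k + 1) (factor s t 0 * shift s t F) =
      X 0 * subst s t (PowerSeries.coeff k F) := by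
  simp only [factor_zero_mul, map_add, PowerSeries.coeff_C_mul, PowerSeries.coeff_succ_X_mul,
    coeff_shift_two_mul_add_one, coeff_shift_two_mul, coeff_X_mul_shift_two_mul]
  ring

theorem coeff_factor_zero_mul_shift_two_mul_succ (F : PowerSeries R) (k : ℕ) :
    PowerSeries.coeff (2 * (k + 1)) (factor s t 0 * shift s t F) =
      subst s t (PowerSeries.coeff (k + 1) F) + X 1 * subst s t (PowerSeries.coeff k F) := by
  rw [show 2 * (k + 1) = 2 * k + 1 + 1 by ring]
  simp only [factor_zero_mul, map_add, PowerSeries.coeff_C_mul, PowerSeries.coeff_succ_X_mul,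
    coeff_shift_two_mul_add_one, coeff_shift_two_mul]
  rw [show 2 * k + 1 + 1 = 2 * (k + 1) by ring, coeff_shift_two_mul]
  ring

theorem coeff_prod_factor (w : ℕ → R) (hw1 : w 1 = 1)
    (hweven : ∀ n, 1 ≤ n → w (2 * n) = X 0 * subst s t (w n))
    (hwodd : ∀ n, 1 ≤ n → w (2 * n + 1) = X 1 * subst s t (w n) + subst s t (w (n + 1)))
    (N : ℕ) :
    ∀ m < 2 ^ N, PowerSeries.coeff m (∏ j ∈ Finset.range N, factor s t j) = w (m + 1) := by
  induction N with
  | zero =>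
    intro m hm
    obtain rfl : m = 0 := by omega
    simp [hw1]
  | succ N ih =>
    intro m hm
    rw [pow_succ'] at hm
    rw [prod_factor_succ]
    obtain ⟨k, rfl | rfl⟩ := Nat.even_or_odd' m
    · cases k with
      | zero => rw [coeff_factor_zero_mul_shift_zero, ih 0 (by omega), hw1, subst_one]
      | succ k =>
        rw [coeff_factor_zero_mul_shift_two_mul_succ, ih k (by omega), ih (k + 1) (by omega),
          hwodd (k + 1) (by omega), add_comm]
    · rw [coeff_factor_zero_mul_shift_two_mul_add_one, ih k (by omega),
        show 2 * k + 1 + 1 = 2 * (k + 1) by ring, hweven (k + 1) (by omega)]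

end SternPolynomial

theorem omega_generating_function_general (s t : ℕ)
    (w : ℕ → MvPolynomial (Fin 2) ℤ)
    (hw0 : w 0 = 0) (hw1 : w 1 = 1)
    (hweven : ∀ n, 1 ≤ n → w (2 * n) = X 0 * subst s t (w n))
    (hwodd : ∀ n, 1 ≤ n → w (2 * n + 1) = X 1 * subst s t (w n) + subst s t (w (n + 1))) :
    ∀ n N : ℕ, n < 2 ^ N →
      PowerSeries.coeff (R := MvPolynomial (Fin 2) ℤ) n
        (PowerSeries.X *
          ∏ j ∈ Finset.range N,
            (1 + PowerSeries.C (R := MvPolynomial (Fin 2) ℤ) ((X 0 : MvPolynomial (Fin 2) ℤ) ^ s ^ j) *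
                  PowerSeries.X ^ 2 ^ j +
                PowerSeries.C (R := MvPolynomial (Fin 2) ℤ) ((X 1 : MvPolynomial (Fin 2) ℤ) ^ t ^ j) *
                  PowerSeries.X ^ 2 ^ (j + 1))) = w n := by
  intro n N hn
  cases n with
  | zero => rw [PowerSeries.coeff_zero_X_mul, hw0]
  | succ m =>
    rw [PowerSeries.coeff_succ_X_mul]
    exact SternPolynomial.coeff_prod_factor s t w hw1 hweven hwodd N m (by omega)

/-- Generating function of the 2-parameter generalized Stern polynomials:
`∑_{n≥1} ω_{s,t}(n; y, z) q^n = q ∏_{j≥0} (1 + y^{s^j} q^{2^j} + z^{t^j} q^{2^{j+1}})`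
as formal power series over `ℤ[y, z]`.  The infinite product is rendered
coefficientwise: the coefficient of `q^n` in `q ∏_{j<N}` has stabilized once `n < 2^N`. -/
theorem omega_generating_function (s t : ℕ) (hs : 1 ≤ s) (ht : 1 ≤ t)
    (w : ℕ → MvPolynomial (Fin 2) ℤ)
    (hw0 : w 0 = 0) (hw1 : w 1 = 1)
    (hweven : ∀ n, 1 ≤ n → w (2 * n) = X 0 * subst s t (w n))
    (hwodd : ∀ n, 1 ≤ n → w (2 * n + 1) = X 1 * subst s t (w n) + subst s t (w (n + 1))) :
    ∀ n N : ℕ, n < 2 ^ N →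
      PowerSeries.coeff (R := MvPolynomial (Fin 2) ℤ) n
        (PowerSeries.X *
          ∏ j ∈ Finset.range N,
            (1 + PowerSeries.C (R := MvPolynomial (Fin 2) ℤ) ((X 0 : MvPolynomial (Fin 2) ℤ) ^ s ^ j) *
                  PowerSeries.X ^ 2 ^ j +
                PowerSeries.C (R := MvPolynomial (Fin 2) ℤ) ((X 1 : MvPolynomial (Fin 2) ℤ) ^ t ^ j) *
                  PowerSeries.X ^ 2 ^ (j + 1))) = w n :=
  omega_generating_function_general s t w hw0 hw1 hweven hwodd
end

section
/- For integers s, t ≥ 1 and n ≥ 0, ω_{s,t}(n+1;y,z) = Σ_{k=0}^{⌊n/2⌋} (C(n-k,k) mod 2) · y^{d_s(n-2k)} · z^{d_t(k)}, where d_t(m) = Σ_{j≥0} c_j t^j when m = Σ_{j≥0} c_j 2^j is the binary expansion of m (c_j ∈ {0,1}). -/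
open MvPolynomial

/-- `binaryWeight t m = ∑_j c_j t^j` where `m = ∑_j c_j 2^j` (`c_j ∈ {0,1}`) is the
binary expansion of `m`. -/
def binaryWeight (t : ℕ) : ℕ → ℕ
  | 0 => 0
  | m + 1 => (m + 1) % 2 + t * binaryWeight t ((m + 1) / 2)
decreasing_by omega


lemma lucas2 (n k : ℕ) : n.choose k % 2 = ((n % 2).choose (k % 2) * ((n / 2).choose (k / 2))) % 2 := by
  haveI : Fact (Nat.Prime 2) := ⟨Nat.prime_two⟩
  exact Choose.choose_modEq_choose_mod_mul_choose_div_nat (p := 2)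

lemma l_ee (a b : ℕ) : (2*a).choose (2*b) % 2 = a.choose b % 2 := by
  rw [lucas2]
  have h1 : 2*a % 2 = 0 := by omega
  have h2 : 2*b % 2 = 0 := by omega
  have h3 : 2*a / 2 = a := by omega
  have h4 : 2*b / 2 = b := by omega
  simp [h1, h2, h3, h4]

lemma l_oe (a b : ℕ) : (2*a+1).choose (2*b) % 2 = a.choose b % 2 := by
  rw [lucas2]
  have h1 : (2*a+1) % 2 = 1 := by omega
  have h2 : 2*b % 2 = 0 := by omega
  have h3 : (2*a+1) / 2 = a := by omega
  have h4 : 2*b / 2 = b := by omega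
  simp [h1, h2, h3, h4]

lemma l_oo (a b : ℕ) : (2*a+1).choose (2*b+1) % 2 = a.choose b % 2 := by
  rw [lucas2]
  have h1 : (2*a+1) % 2 = 1 := by omega
  have h2 : (2*b+1) % 2 = 1 := by omega
  have h3 : (2*a+1) / 2 = a := by omega
  have h4 : (2*b+1) / 2 = b := by omega
  simp [h1, h2, h3, h4]

lemma l_eo (a b : ℕ) : (2*a).choose (2*b+1) % 2 = 0 := by
  rw [lucas2]
  have h1 : 2*a % 2 = 0 := by omega
  have h2 : (2*b+1) % 2 = 1 := by omega
  simp [h1, h2]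

lemma bw_succ (t m : ℕ) : binaryWeight t (m+1) = (m+1)%2 + t * binaryWeight t ((m+1)/2) := by
  rw [binaryWeight]

lemma bw_even (t j : ℕ) : binaryWeight t (2*j) = t * binaryWeight t j := by
  cases j with
  | zero => simp [binaryWeight]
  | succ j =>
    have h : 2*(j+1) = (2*j+1)+1 := by ring
    rw [h, bw_succ]
    have h1 : (2*j+1+1) % 2 = 0 := by omega
    have h2 : (2*j+1+1) / 2 = j+1 := by omega
    simp [h1, h2]

lemma bw_odd (t j : ℕ) : binaryWeight t (2*j+1) = 1 + t * binaryWeight t j := by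
  rw [bw_succ]
  have h1 : (2*j+1) % 2 = 1 := by omega
  have h2 : (2*j+1) / 2 = j := by omega
  rw [h1, h2]

lemma sum_split {M : Type*} [AddCommMonoid M] (f : ℕ → M) (m : ℕ) :
    ∑ k ∈ Finset.range m, f k
      = (∑ j ∈ Finset.range ((m+1)/2), f (2*j)) + ∑ j ∈ Finset.range (m/2), f (2*j+1) := by
  induction m with
  | zero => simp
  | succ m ih =>
    rw [Finset.sum_range_succ, ih]
    rcases Nat.even_or_odd m with ⟨c, hc⟩ | ⟨c, hc⟩
    · have e1 : (m+1)/2 = c := by omega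
      have e2 : m/2 = c := by omega
      have e3 : (m+1+1)/2 = c+1 := by omega
      have e4 : 2*c = m := by omega
      rw [e1, e2, e3]
      conv_rhs => rw [Finset.sum_range_succ]
      rw [e4]; abel
    · have e1 : (m+1)/2 = c+1 := by omega
      have e2 : m/2 = c := by omega
      have e3 : (m+1+1)/2 = c+1 := by omega
      have e4 : 2*c+1 = m := by omega
      rw [e1, e2, e3]
      conv_rhs => rw [Finset.sum_range_succ (f := fun j => f (2*j+1))]
      rw [e4]; abel

lemma subst_sum (s t : ℕ) {α : Type*} (u : Finset α) (g : α → MvPolynomial (Fin 2) ℤ) :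
    subst s t (∑ x ∈ u, g x) = ∑ x ∈ u, subst s t (g x) := map_sum _ _ _

lemma subst_mono (s t a b c : ℕ) :
    subst s t ((c : MvPolynomial (Fin 2) ℤ) * X 0 ^ a * X 1 ^ b)
      = (c : MvPolynomial (Fin 2) ℤ) * X 0 ^ (s*a) * X 1 ^ (t*b) := by
  simp [subst, ← pow_mul, mul_comm]

noncomputable def F (s t n : ℕ) : MvPolynomial (Fin 2) ℤ :=
  ∑ k ∈ Finset.range (n / 2 + 1),
    (((n - k).choose k % 2 : ℕ) : MvPolynomial (Fin 2) ℤ) *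
      X 0 ^ binaryWeight s (n - 2 * k) * X 1 ^ binaryWeight t k

lemma keyOdd (s t c : ℕ) : F s t (2*c+1) = X 0 * subst s t (F s t c) := by
  unfold F
  rw [subst_sum, Finset.mul_sum]
  have hr : (2*c+1)/2 + 1 = c + 1 := by omega
  rw [hr, sum_split]
  have h2 : (c+1+1)/2 = c/2 + 1 := by omega
  rw [h2]
  have hzero : (∑ j ∈ Finset.range ((c+1)/2),
      (((2*c+1 - (2*j+1)).choose (2*j+1) % 2 : ℕ) : MvPolynomial (Fin 2) ℤ) *
        X 0 ^ binaryWeight s (2*c+1 - 2*(2*j+1)) * X 1 ^ binaryWeight t (2*j+1)) = 0 := by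
    apply Finset.sum_eq_zero
    intro j hj
    rw [Finset.mem_range] at hj
    have h5 : 2*c+1 - (2*j+1) = 2*(c-j) := by omega
    rw [h5, l_eo]
    simp
  rw [hzero, add_zero]
  apply Finset.sum_congr rfl
  intro j hj
  rw [Finset.mem_range] at hj
  have hj' : 2*j ≤ c := by omega
  have h5 : 2*c+1 - 2*j = 2*(c-j)+1 := by omega
  have h7 : 2*c+1 - 2*(2*j) = 2*(c-2*j)+1 := by omega
  rw [h5, l_oe, h7, bw_odd, bw_even, subst_mono]
  ring

lemma keyEven (s t c : ℕ) :
    F s t (2*c+2) = X 1 * subst s t (F s t c) + subst s t (F s t (c+1)) := by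
  unfold F
  rw [subst_sum, subst_sum, Finset.mul_sum]
  have hr : (2*c+2)/2 + 1 = c + 2 := by omega
  rw [hr, sum_split]
  have h2 : (c+2+1)/2 = (c+1)/2 + 1 := by omega
  have h3 : (c+2)/2 = c/2 + 1 := by omega
  rw [h2, h3]
  conv_rhs => rw [add_comm]
  congr 1
  · apply Finset.sum_congr rfl
    intro j hj
    rw [Finset.mem_range] at hj
    have hj' : 2*j ≤ c+1 := by omega
    have h5 : 2*c+2 - 2*j = 2*(c+1-j) := by omega
    have h7 : 2*c+2 - 2*(2*j) = 2*(c+1-2*j) := by omega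
    rw [h5, l_ee, h7, bw_even, bw_even, subst_mono]
  · apply Finset.sum_congr rfl
    intro j hj
    rw [Finset.mem_range] at hj
    have hj' : 2*j ≤ c := by omega
    have h5 : 2*c+2 - (2*j+1) = 2*(c-j)+1 := by omega
    have h7 : 2*c+2 - 2*(2*j+1) = 2*(c-2*j) := by omega
    rw [h5, l_oo, h7, bw_even, bw_odd, subst_mono]
    ring

/-- Explicit formula: for `s, t ≥ 1` and `n ≥ 0`,
`ω_{s,t}(n+1; y, z) = ∑_{k=0}^{⌊n/2⌋} (C(n-k, k) mod 2) y^{d_s(n-2k)} z^{d_t(k)}`. -/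
theorem omega_explicit_formula (s t : ℕ) (hs : 1 ≤ s) (ht : 1 ≤ t)
    (w : ℕ → MvPolynomial (Fin 2) ℤ)
    (hw0 : w 0 = 0) (hw1 : w 1 = 1)
    (hweven : ∀ n, 1 ≤ n → w (2 * n) = X 0 * subst s t (w n))
    (hwodd : ∀ n, 1 ≤ n → w (2 * n + 1) = X 1 * subst s t (w n) + subst s t (w (n + 1)))
    (n : ℕ) :
    w (n + 1) =
      ∑ k ∈ Finset.range (n / 2 + 1),
        (((n - k).choose k % 2 : ℕ) : MvPolynomial (Fin 2) ℤ) *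
          X 0 ^ binaryWeight s (n - 2 * k) * X 1 ^ binaryWeight t k := by
  induction n using Nat.strong_induction_on with
  | _ n ih =>
    have ihF : ∀ m, m < n → w (m+1) = F s t m := fun m hm => ih m hm
    show w (n+1) = F s t n
    rcases Nat.even_or_odd n with ⟨c, hc⟩ | ⟨c, hc⟩
    · rcases c with _ | d
      · subst hc
        rw [hw1]
        simp [F, binaryWeight]
      · have hn : n = 2*d+2 := by omega
        subst hn
        have he : 2*d+2+1 = 2*(d+1)+1 := by ring
        rw [he, hwodd (d+1) (by omega), ihF d (by omega), ihF (d+1) (by omega), keyEven]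
    · subst hc
      have he : 2*c+1+1 = 2*(c+1) := by ring
      rw [he, hweven (c+1) (by omega), ihF c (by omega), keyOdd]
end

section
/- For integers s, t ≥ 1 and n ≥ 0, ω_{s,t}(n+1;y,z) = Σ_{k₁+2k₂=n} (C(k₁+k₂, k₂) mod 2) · y^{d_s(k₁)} · z^{d_t(k₂)}, where the sum is over all nonnegative integers k₁, k₂ with k₁ + 2k₂ = n. -/
open MvPolynomial

namespace OmegaAux

lemma lucas2 (n k : ℕ) : n.choose k % 2 = ((n % 2).choose (k % 2) * (n / 2).choose (k / 2)) % 2 := by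
  haveI : Fact (Nat.Prime 2) := ⟨Nat.prime_two⟩
  exact Choose.choose_modEq_choose_mod_mul_choose_div_nat (p := 2)

lemma chooseEE (a b : ℕ) : (2*a).choose (2*b) % 2 = a.choose b % 2 := by
  rw [lucas2]
  have h1 : 2*a % 2 = 0 := by omega
  have h2 : 2*a / 2 = a := by omega
  have h3 : 2*b % 2 = 0 := by omega
  have h4 : 2*b / 2 = b := by omega
  rw [h1, h2, h3, h4]; simp

lemma chooseOE (a b : ℕ) : (2*a+1).choose (2*b) % 2 = a.choose b % 2 := by
  rw [lucas2]
  have h1 : (2*a+1) % 2 = 1 := by omega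
  have h2 : (2*a+1) / 2 = a := by omega
  have h3 : 2*b % 2 = 0 := by omega
  have h4 : 2*b / 2 = b := by omega
  rw [h1, h2, h3, h4]; simp

lemma chooseOO (a b : ℕ) : (2*a+1).choose (2*b+1) % 2 = a.choose b % 2 := by
  rw [lucas2]
  have h1 : (2*a+1) % 2 = 1 := by omega
  have h2 : (2*a+1) / 2 = a := by omega
  have h3 : (2*b+1) % 2 = 1 := by omega
  have h4 : (2*b+1) / 2 = b := by omega
  rw [h1, h2, h3, h4]; simp

lemma chooseEO (a b : ℕ) : (2*a).choose (2*b+1) % 2 = 0 := by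
  rw [lucas2]
  have h1 : 2*a % 2 = 0 := by omega
  have h3 : (2*b+1) % 2 = 1 := by omega
  rw [h1, h3]; simp

lemma bw_rec (t n : ℕ) : binaryWeight t n = n % 2 + t * binaryWeight t (n / 2) := by
  cases n with
  | zero => simp [binaryWeight]
  | succ m => rw [binaryWeight]

lemma bw_even (t a : ℕ) : binaryWeight t (2*a) = t * binaryWeight t a := by
  have h1 : 2*a % 2 = 0 := by omega
  have h2 : 2*a / 2 = a := by omega
  rw [bw_rec, h1, h2, zero_add]

lemma bw_odd (t a : ℕ) : binaryWeight t (2*a+1) = 1 + t * binaryWeight t a := by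
  have h1 : (2*a+1) % 2 = 1 := by omega
  have h2 : (2*a+1) / 2 = a := by omega
  rw [bw_rec, h1, h2]

lemma subst_term (s t c a b : ℕ) :
    subst s t ((c : MvPolynomial (Fin 2) ℤ) * X 0 ^ a * X 1 ^ b)
      = (c : MvPolynomial (Fin 2) ℤ) * X 0 ^ (s * a) * X 1 ^ (t * b) := by
  simp [subst, mul_comm, pow_mul]

lemma subst_zero (s t : ℕ) : subst s t 0 = 0 := by simp [subst]

lemma subst_sum (s t : ℕ) {ι : Type*} (S : Finset ι) (f : ι → MvPolynomial (Fin 2) ℤ) :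
    subst s t (∑ i ∈ S, f i) = ∑ i ∈ S, subst s t (f i) := by
  simp [subst]

end OmegaAux

namespace OmegaAux

noncomputable def term (s t n k : ℕ) : MvPolynomial (Fin 2) ℤ :=
  if 2 * k ≤ n then
    (((n - k).choose k % 2 : ℕ) : MvPolynomial (Fin 2) ℤ) *
      X 0 ^ binaryWeight s (n - 2*k) * X 1 ^ binaryWeight t k
  else 0

noncomputable def G (s t n : ℕ) : MvPolynomial (Fin 2) ℤ :=
  ∑ k ∈ Finset.range (n+1), term s t n k

lemma G_zero (s t : ℕ) : G s t 0 = 1 := by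
  simp [G, term, binaryWeight]

lemma sum_range_two_mul {M : Type*} [AddCommMonoid M] (f : ℕ → M) (c : ℕ) :
    ∑ i ∈ Finset.range (2*c), f i = ∑ j ∈ Finset.range c, (f (2*j) + f (2*j+1)) := by
  induction c with
  | zero => simp
  | succ c ih =>
    rw [show 2*(c+1) = 2*c+1+1 by ring, Finset.sum_range_succ, Finset.sum_range_succ, ih,
      Finset.sum_range_succ]
    abel

end OmegaAux

namespace OmegaAux

lemma term_odd_odd_zero (s t m j : ℕ) : term s t (2*m+1) (2*j+1) = 0 := by
  unfold term
  split_ifs with h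
  · have e : 2*m+1 - (2*j+1) = 2*(m-j) := by omega
    rw [e, chooseEO]
    simp
  · rfl

lemma term_odd (s t m j : ℕ) (hj : j ≤ m) :
    term s t (2*m+1) (2*j) = X 0 * subst s t (term s t m j) := by
  unfold term
  by_cases h : 2*j ≤ m
  · rw [if_pos (by omega : 2*(2*j) ≤ 2*m+1), if_pos h, subst_term]
    have e1 : 2*m+1 - 2*j = 2*(m-j)+1 := by omega
    have e2 : 2*m+1 - 2*(2*j) = 2*(m-2*j)+1 := by omega
    rw [e1, e2, chooseOE, bw_odd, bw_even]
    ring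
  · rw [if_neg (by omega : ¬ 2*(2*j) ≤ 2*m+1), if_neg h, subst_zero, mul_zero]

lemma term_even_even (s t m j : ℕ) (hj : j ≤ m) :
    term s t (2*m+2) (2*j) = subst s t (term s t (m+1) j) := by
  unfold term
  by_cases h : 2*j ≤ m+1
  · rw [if_pos (by omega : 2*(2*j) ≤ 2*m+2), if_pos h, subst_term]
    have e1 : 2*m+2 - 2*j = 2*(m+1-j) := by omega
    have e2 : 2*m+2 - 2*(2*j) = 2*(m+1-2*j) := by omega
    rw [e1, e2, chooseEE, bw_even, bw_even]
  · rw [if_neg (by omega : ¬ 2*(2*j) ≤ 2*m+2), if_neg h, subst_zero]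

lemma term_even_odd (s t m j : ℕ) (hj : j ≤ m) :
    term s t (2*m+2) (2*j+1) = X 1 * subst s t (term s t m j) := by
  unfold term
  by_cases h : 2*j ≤ m
  · rw [if_pos (by omega : 2*(2*j+1) ≤ 2*m+2), if_pos h, subst_term]
    have e1 : 2*m+2 - (2*j+1) = 2*(m-j)+1 := by omega
    have e2 : 2*m+2 - 2*(2*j+1) = 2*(m-2*j) := by omega
    rw [e1, e2, chooseOO, bw_even, bw_odd]
    ring
  · rw [if_neg (by omega : ¬ 2*(2*j+1) ≤ 2*m+2), if_neg h, subst_zero, mul_zero]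

lemma G_odd (s t m : ℕ) : G s t (2*m+1) = X 0 * subst s t (G s t m) := by
  unfold G
  rw [show 2*m+1+1 = 2*(m+1) by ring, sum_range_two_mul, subst_sum, Finset.mul_sum]
  refine Finset.sum_congr rfl fun j hj => ?_
  have hjm : j ≤ m := by simpa [Nat.lt_succ_iff] using hj
  rw [term_odd_odd_zero, add_zero, term_odd s t m j hjm]

lemma G_even (s t m : ℕ) :
    G s t (2*m+2) = X 1 * subst s t (G s t m) + subst s t (G s t (m+1)) := by
  have hlast : term s t (2*m+2) (2*(m+1)) = 0 := by
    unfold term; rw [if_neg (by omega)]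
  have hlast2 : term s t (m+1) (m+1) = 0 := by
    unfold term; rw [if_neg (by omega)]
  unfold G
  rw [show 2*m+2+1 = 2*(m+1)+1 by ring, Finset.sum_range_succ, hlast, add_zero,
    sum_range_two_mul, subst_sum, subst_sum, Finset.mul_sum,
    Finset.sum_range_succ (f := fun j => subst s t (term s t (m+1) j)), hlast2, subst_zero,
    add_zero, ← Finset.sum_add_distrib]
  refine Finset.sum_congr rfl fun j hj => ?_
  have hjm : j ≤ m := by simpa [Nat.lt_succ_iff] using hj
  rw [term_even_even s t m j hjm, term_even_odd s t m j hjm, add_comm]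

end OmegaAux

namespace OmegaAux

lemma w_eq_G (s t : ℕ) (w : ℕ → MvPolynomial (Fin 2) ℤ) (hw1 : w 1 = 1)
    (hweven : ∀ n, 1 ≤ n → w (2 * n) = X 0 * subst s t (w n))
    (hwodd : ∀ n, 1 ≤ n → w (2 * n + 1) = X 1 * subst s t (w n) + subst s t (w (n + 1)))
    (n : ℕ) : w (n + 1) = G s t n := by
  induction n using Nat.strong_induction_on with
  | _ n ih =>
  match n with
  | 0 => rw [hw1, G_zero]
  | (k+1) =>
    rcases Nat.even_or_odd k with ⟨m, hm⟩ | ⟨m, hm⟩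
    · subst hm
      rw [show m+m+1+1 = 2*(m+1) by ring, hweven (m+1) (by omega), ih m (by omega),
        show m+m+1 = 2*m+1 by ring, G_odd]
    · subst hm
      rw [show 2*m+1+1+1 = 2*(m+1)+1 by ring, hwodd (m+1) (by omega), ih m (by omega),
        ih (m+1) (by omega), show 2*m+1+1 = 2*m+2 by ring, G_even]

lemma pair_sum (s t n : ℕ) :
    ∑ p ∈ (Finset.range (n + 1) ×ˢ Finset.range (n + 1)).filter
        (fun p => p.1 + 2 * p.2 = n),
      (((p.1 + p.2).choose p.2 % 2 : ℕ) : MvPolynomial (Fin 2) ℤ) *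
        X 0 ^ binaryWeight s p.1 * X 1 ^ binaryWeight t p.2 = G s t n := by
  unfold G term
  rw [← Finset.sum_filter]
  refine Finset.sum_nbij' (i := fun p => p.2) (j := fun k => (n - 2*k, k)) ?_ ?_ ?_ ?_ ?_
  · intro p hp
    simp only [Finset.mem_filter, Finset.mem_product, Finset.mem_range] at hp ⊢
    omega
  · intro k hk
    simp only [Finset.mem_filter, Finset.mem_product, Finset.mem_range] at hk ⊢
    omega
  · intro p hp
    simp only [Finset.mem_filter, Finset.mem_product, Finset.mem_range] at hp
    ext <;> simp <;> omega
  · intro k hk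
    rfl
  · intro p hp
    simp only [Finset.mem_filter, Finset.mem_product, Finset.mem_range] at hp
    have e1 : n - p.2 = p.1 + p.2 := by omega
    have e2 : n - 2*p.2 = p.1 := by omega
    rw [e1, e2]

end OmegaAux

/-- Explicit formula: for `s, t ≥ 1` and `n ≥ 0`,
`ω_{s,t}(n+1; y, z) = ∑_{k₁ + 2k₂ = n} (C(k₁+k₂, k₂) mod 2) y^{d_s(k₁)} z^{d_t(k₂)}`,
the sum being over all nonnegative integers `k₁, k₂` with `k₁ + 2k₂ = n`. -/
theorem omega_explicit_formula_pairs (s t : ℕ) (hs : 1 ≤ s) (ht : 1 ≤ t)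
    (w : ℕ → MvPolynomial (Fin 2) ℤ)
    (hw0 : w 0 = 0) (hw1 : w 1 = 1)
    (hweven : ∀ n, 1 ≤ n → w (2 * n) = X 0 * subst s t (w n))
    (hwodd : ∀ n, 1 ≤ n → w (2 * n + 1) = X 1 * subst s t (w n) + subst s t (w (n + 1)))
    (n : ℕ) :
    w (n + 1) =
      ∑ p ∈ (Finset.range (n + 1) ×ˢ Finset.range (n + 1)).filter
          (fun p => p.1 + 2 * p.2 = n),
        (((p.1 + p.2).choose p.2 % 2 : ℕ) : MvPolynomial (Fin 2) ℤ) *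
          X 0 ^ binaryWeight s p.1 * X 1 ^ binaryWeight t p.2 := by
  rw [OmegaAux.pair_sum]
  exact OmegaAux.w_eq_G s t w hw1 hweven hwodd n
end

section
/- Let b ≥ 2, ρ ≥ 1, Λ = (λ₁,...,λ_ρ) with λ = λ₁+...+λ_ρ, and let Ω_{b,T}^Λ(n;Z) be defined by the generating function Σ_{n≥0} Ω(n;Z) q^n = Π_{j≥0} Π_{ℓ=1}^ρ (1 + z_{ℓ,1}^{t_{ℓ,1}^j} q^{b^j} + ... + z_{ℓ,λ_ℓ}^{t_{ℓ,λ_ℓ}^j} q^{λ_ℓ·b^j}). Then Ω(0;Z) = 1, and for all n ≥ 0 and 0 ≤ j ≤ b-1, Ω(bn+j;Z) = Σ_{k=0}^{⌊λ/b⌋} Y_{bk+j} · Ω(n-k;Z^T), where Ω(m;Z) = 0 for m < 0, Z^T replaces each variable z_{ℓ,i} by z_{ℓ,i}^{t_{ℓ,i}}, and Y_ν = Σ z_{1,i₁}···z_{ρ,i_ρ} summed over all tuples with i₁+...+i_ρ = ν and 0 ≤ i_ℓ ≤ λ_ℓ (with z_{ℓ,0} = 1, and Y_μ = 0 for μ >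 λ). -/
open MvPolynomial

/-- The variables `z_{ℓ,i}` (`1 ≤ ℓ ≤ ρ`, `1 ≤ i ≤ λ_ℓ`), indexed by pairs
`⟨ℓ, i⟩` with `ℓ : Fin ρ` and `i : Fin (Λ ℓ)`. -/
abbrev ColorIdx (ρ : ℕ) (Λ : Fin ρ → ℕ) := (ℓ : Fin ρ) × Fin (Λ ℓ)

/-- The factor of the generating-function product indexed by `j`:
`∏_{ℓ=1}^{ρ} (1 + z_{ℓ,1}^{t_{ℓ,1}^j} q^{b^j} + ⋯ + z_{ℓ,λ_ℓ}^{t_{ℓ,λ_ℓ}^j} q^{λ_ℓ b^j})`. -/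
noncomputable def OmegaFactor (b ρ : ℕ) (Λ : Fin ρ → ℕ) (T : ColorIdx ρ Λ → ℕ) (j : ℕ) :
    PowerSeries (MvPolynomial (ColorIdx ρ Λ) ℤ) :=
  ∏ ℓ : Fin ρ,
    (1 + ∑ i : Fin (Λ ℓ),
      PowerSeries.C
          ((X (⟨ℓ, i⟩ : ColorIdx ρ Λ) : MvPolynomial (ColorIdx ρ Λ) ℤ) ^ T ⟨ℓ, i⟩ ^ j) *
        PowerSeries.X ^ ((i.1 + 1) * b ^ j))

/-- `Ω` is (characterized as being) defined by the generating function
`∑_{n≥0} Ω(n; Z) q^n = ∏_{j≥0} OmegaFactor j`; the infinite product is rendered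
coefficientwise via its stabilized partial products (`n < b^N`). -/
def IsOmega (b ρ : ℕ) (Λ : Fin ρ → ℕ) (T : ColorIdx ρ Λ → ℕ)
    (Om : ℕ → MvPolynomial (ColorIdx ρ Λ) ℤ) : Prop :=
  ∀ n N : ℕ, n < b ^ N →
    PowerSeries.coeff n
      (∏ j ∈ Finset.range N, OmegaFactor b ρ Λ T j) = Om n

/-- The substitution `Z ↦ Z^T`, replacing each variable `z_{ℓ,i}` by `z_{ℓ,i}^{t_{ℓ,i}}`. -/
noncomputable def substT (ρ : ℕ) (Λ : Fin ρ → ℕ) (T : ColorIdx ρ Λ → ℕ)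
    (p : MvPolynomial (ColorIdx ρ Λ) ℤ) : MvPolynomial (ColorIdx ρ Λ) ℤ :=
  aeval (fun v : ColorIdx ρ Λ => (X v : MvPolynomial (ColorIdx ρ Λ) ℤ) ^ T v) p

/-- `Ycoeff ν = ∑ z_{1,i₁} ⋯ z_{ρ,i_ρ}`, summed over all `(i₁, …, i_ρ)` with
`i₁ + ⋯ + i_ρ = ν` and `0 ≤ i_ℓ ≤ λ_ℓ`, where `z_{ℓ,0} = 1`.  (In particular
`Ycoeff 0 = 1` and `Ycoeff μ = 0` for `μ > λ₁ + ⋯ + λ_ρ`.) -/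
noncomputable def Ycoeff (ρ : ℕ) (Λ : Fin ρ → ℕ) (ν : ℕ) :
    MvPolynomial (ColorIdx ρ Λ) ℤ :=
  ∑ i : (ℓ : Fin ρ) → Fin (Λ ℓ + 1),
    if (∑ ℓ, (i ℓ : ℕ)) = ν then
      ∏ ℓ, (if h : (i ℓ : ℕ) = 0 then 1 else
        (X (⟨ℓ, ⟨(i ℓ : ℕ) - 1, by have := (i ℓ).isLt; omega⟩⟩ : ColorIdx ρ Λ) :
          MvPolynomial (ColorIdx ρ Λ) ℤ))
    else 0

/-!
The `j`-th factor of the product arises from the `(j-1)`-st by the substitutions `Z ↦ Z^T` and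
`q ↦ q^b`, so the product over `j ≥ 1` is the image of the whole product under these two ring
homomorphisms; its coefficients vanish away from multiples of `b`. The factor `j = 0` is the
polynomial `∑_ν Y_ν q^ν`, of degree `λ`. Comparing coefficients of `q^{bn+j}` in this
factorization gives the recurrence, and the partial product up to `b^{n+1} > bn + j` already
determines every coefficient involved.
-/

open Finset

theorem PowerSeries.coeff_prod_sum_C_mul_X_pow {R ι : Type*} [CommSemiring R] [Fintype ι]
    [DecidableEq ι] {κ : ι → Type*} [∀ i, Fintype (κ i)] (a : ∀ i, κ i → R) (e : ∀ i, κ i → ℕ)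
    (ν : ℕ) :
    coeff ν (∏ i, ∑ m, C (a i m) * X ^ e i m) =
      ∑ x : ∀ i, κ i, if ∑ i, e i (x i) = ν then ∏ i, a i (x i) else 0 := by
  rw [Fintype.prod_sum, map_sum]
  refine sum_congr rfl fun x _ => ?_
  rw [prod_mul_distrib, ← map_prod, prod_pow_eq_pow_sum, coeff_C_mul_X_pow]
  exact if_congr eq_comm rfl rfl

theorem PowerSeries.coeff_mul_expand_mul_add {R : Type*} [CommRing R] {b : ℕ} (hb : b ≠ 0)
    (φ ψ : PowerSeries R) {j : ℕ} (hj : j < b) (n : ℕ) :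
    coeff (b * n + j) (φ * expand b hb ψ) =
      ∑ p ∈ antidiagonal n, coeff (b * p.1 + j) φ * coeff p.2 ψ := by
  have hb0 : 0 < b := Nat.pos_of_ne_zero hb
  rw [coeff_mul]
  symm
  refine sum_of_injOn (fun p => (b * p.1 + j, b * p.2)) ?_ ?_ ?_ ?_
  · rintro ⟨k, r⟩ - ⟨k', r'⟩ - h
    simp only [Prod.mk.injEq, add_left_inj] at h
    simp [Nat.eq_of_mul_eq_mul_left hb0 h.1, Nat.eq_of_mul_eq_mul_left hb0 h.2]
  · rintro ⟨k, r⟩ h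
    simp only [mem_coe, HasAntidiagonal.mem_antidiagonal] at h ⊢
    rw [← h]
    ring
  · rintro ⟨p, q⟩ h hq
    simp only [HasAntidiagonal.mem_antidiagonal] at h
    rw [coeff_expand, ite_eq_right_iff.mpr, mul_zero]
    rintro ⟨r, rfl⟩
    have hr : r ≤ n := by
      by_contra! hr
      nlinarith
    refine absurd ⟨(n - r, r), by simp [Nat.sub_add_cancel hr], ?_⟩ hq
    simp only [Prod.mk.injEq, and_true]
    zify [hr] at h ⊢
    linear_combination -h
  · intro p _
    simp only [coeff_expand_mul]

theorem Finset.Nat.sum_antidiagonal_eq_sum_range_ite {M : Type*} [AddCommMonoid M]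
    (f : ℕ × ℕ → M) {K : ℕ} (hf : ∀ k r, K < k → f (k, r) = 0) (n : ℕ) :
    ∑ p ∈ antidiagonal n, f p =
      ∑ k ∈ range (K + 1), if k ≤ n then f (k, n - k) else 0 := by
  rw [Finset.Nat.sum_antidiagonal_eq_sum_range_succ_mk, ← sum_filter,
    ← sum_filter_of_ne (p := fun k => k ≤ K) fun k _ h => ?_]
  · exact sum_congr (by ext; simp; omega) fun _ _ => rfl
  · by_contra! hk
    exact h (hf k _ hk)

section Omega

variable (b ρ : ℕ) (Λ : Fin ρ → ℕ) (T : ColorIdx ρ Λ → ℕ)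

noncomputable def substTHom : MvPolynomial (ColorIdx ρ Λ) ℤ →+* MvPolynomial (ColorIdx ρ Λ) ℤ :=
  (aeval fun v : ColorIdx ρ Λ => (X v : MvPolynomial (ColorIdx ρ Λ) ℤ) ^ T v).toRingHom

theorem substTHom_apply (p : MvPolynomial (ColorIdx ρ Λ) ℤ) :
    substTHom ρ Λ T p = substT ρ Λ T p := rfl

theorem substT_X_pow_pow (v : ColorIdx ρ Λ) (j : ℕ) :
    substT ρ Λ T (X v ^ T v ^ j) = X v ^ T v ^ (j + 1) := by
  rw [substT, map_pow, aeval_X, ← pow_mul, pow_succ']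

theorem OmegaFactor_succ (hb : b ≠ 0) (j : ℕ) :
    OmegaFactor b ρ Λ T (j + 1) =
      PowerSeries.expand b hb (PowerSeries.map (substTHom ρ Λ T) (OmegaFactor b ρ Λ T j)) := by
  simp only [OmegaFactor, map_prod, map_add, map_one, map_sum]
  refine prod_congr rfl fun ℓ _ => congrArg (1 + ·) (sum_congr rfl fun i _ => ?_)
  rw [map_mul, map_mul, map_pow (PowerSeries.map _) PowerSeries.X, PowerSeries.map_C,
    PowerSeries.map_X, PowerSeries.expand_C, map_pow (PowerSeries.expand b hb),
    PowerSeries.expand_X, substTHom_apply, substT_X_pow_pow, ← pow_mul, pow_succ]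
  ring_nf

theorem prod_range_OmegaFactor_succ (hb : b ≠ 0) (n : ℕ) :
    ∏ j ∈ range n, OmegaFactor b ρ Λ T (j + 1) =
      PowerSeries.expand b hb
        (PowerSeries.map (substTHom ρ Λ T) (∏ j ∈ range n, OmegaFactor b ρ Λ T j)) := by
  simp only [OmegaFactor_succ b ρ Λ T hb, map_prod]

noncomputable def zVar (ℓ : Fin ρ) (m : Fin (Λ ℓ + 1)) : MvPolynomial (ColorIdx ρ Λ) ℤ :=
  if h : (m : ℕ) = 0 then 1 else X ⟨ℓ, ⟨m - 1, by omega⟩⟩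

theorem OmegaFactor_zero :
    OmegaFactor b ρ Λ T 0 =
      ∏ ℓ, ∑ m : Fin (Λ ℓ + 1), PowerSeries.C (zVar ρ Λ ℓ m) * PowerSeries.X ^ (m : ℕ) := by
  refine prod_congr rfl fun ℓ _ => ?_
  rw [Fin.sum_univ_succ]
  simp [zVar]

theorem coeff_OmegaFactor_zero (ν : ℕ) :
    PowerSeries.coeff ν (OmegaFactor b ρ Λ T 0) = Ycoeff ρ Λ ν := by
  rw [OmegaFactor_zero, PowerSeries.coeff_prod_sum_C_mul_X_pow]
  rfl

end Omega

theorem Ycoeff_eq_zero_of_lt (ρ : ℕ) (Λ : Fin ρ → ℕ) {μ : ℕ} (h : ∑ ℓ, Λ ℓ < μ) :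
    Ycoeff ρ Λ μ = 0 := by
  refine sum_eq_zero fun i _ => if_neg fun hi => ?_
  have : ∑ ℓ, (i ℓ : ℕ) ≤ ∑ ℓ, Λ ℓ := sum_le_sum fun ℓ _ => Nat.lt_succ_iff.mp (i ℓ).isLt
  omega

theorem Omega_recurrence_general (b ρ : ℕ) (hb : 2 ≤ b)
    (Λ : Fin ρ → ℕ) (T : ColorIdx ρ Λ → ℕ)
    (Om : ℕ → MvPolynomial (ColorIdx ρ Λ) ℤ) (hOm : IsOmega b ρ Λ T Om) :
    Om 0 = 1 ∧
    ∀ n j : ℕ, j ≤ b - 1 →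
      Om (b * n + j) =
        ∑ k ∈ Finset.range ((∑ ℓ, Λ ℓ) / b + 1),
          Ycoeff ρ Λ (b * k + j) *
            (if k ≤ n then substT ρ Λ T (Om (n - k)) else 0) := by
  have hb0 : b ≠ 0 := by omega
  refine ⟨by simpa using (hOm 0 0 one_pos).symm, fun n j hj => ?_⟩
  have hjb : j < b := by omega
  have hn : n < b ^ n := Nat.lt_pow_self hb
  have hN : b * n + j < b ^ (n + 1) := by rw [pow_succ']; nlinarith
  rw [← hOm _ _ hN, prod_range_succ', mul_comm _ (OmegaFactor b ρ Λ T 0),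
    prod_range_OmegaFactor_succ b ρ Λ T hb0, PowerSeries.coeff_mul_expand_mul_add hb0 _ _ hjb,
    Finset.Nat.sum_antidiagonal_eq_sum_range_ite (K := (∑ ℓ, Λ ℓ) / b)]
  · refine sum_congr rfl fun k _ => ?_
    rw [mul_ite, mul_zero]
    refine if_congr Iff.rfl ?_ rfl
    rw [coeff_OmegaFactor_zero, PowerSeries.coeff_map, substTHom_apply,
      hOm _ _ (lt_of_le_of_lt (Nat.sub_le n k) hn)]
  · intro k r hk
    have hkb := (Nat.div_lt_iff_lt_mul (Nat.pos_of_ne_zero hb0)).mp hk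
    rw [coeff_OmegaFactor_zero, Ycoeff_eq_zero_of_lt ρ Λ (by dsimp only; linarith), zero_mul]

/-- Recurrence for the polynomials `Ω_{b,T}^Λ`: `Ω(0; Z) = 1` and for `n ≥ 0`,
`0 ≤ j ≤ b-1`, `Ω(bn + j; Z) = ∑_{k=0}^{⌊λ/b⌋} Y_{bk+j} Ω(n-k; Z^T)`, with the
convention `Ω(m; Z) = 0` for `m < 0` (rendered by the `if k ≤ n` guard). -/
theorem Omega_recurrence (b ρ : ℕ) (hb : 2 ≤ b) (hρ : 1 ≤ ρ)
    (Λ : Fin ρ → ℕ) (hΛ : ∀ ℓ, 1 ≤ Λ ℓ) (T : ColorIdx ρ Λ → ℕ) (hT : ∀ v, 1 ≤ T v)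
    (Om : ℕ → MvPolynomial (ColorIdx ρ Λ) ℤ) (hOm : IsOmega b ρ Λ T Om) :
    Om 0 = 1 ∧
    ∀ n j : ℕ, j ≤ b - 1 →
      Om (b * n + j) =
        ∑ k ∈ Finset.range ((∑ ℓ, Λ ℓ) / b + 1),
          Ycoeff ρ Λ (b * k + j) *
            (if k ≤ n then substT ρ Λ T (Om (n - k)) else 0) :=
  Omega_recurrence_general b ρ hb Λ T Om hOm
end

section
/- Let λ ≥ 1 be an integer, T = (t₁,...,t_λ) positive integers, Z = (z₁,...,z_λ) variables. Then for all n ≥ 0, ω_{2,T}^λ(n+1;Z) = Σ (C(k₁+...+k_λ; k₁,...,k_λ) mod 2) · z₁^{d_{t₁}(k₁)} ··· z_λ^{d_{t_λ}(k_λ)}, where the sum is over all nonnegative integers k₁,...,k_λ with k₁ + 2k₂ + ... + λk_λ = n, the multinomial coefficient is reduced modulo 2 to {0,1}, and d_t(k) = Σ_j c_j t^j for the binary expansion k = Σ_j c_j 2^j. -/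
/-!
Let `φ` be the substitution `z_i ↦ z_i ^ t_i` and `P_N` the product of the first `N` factors of
the generating function. The `(j+1)`-st factor is the `j`-th one with `φ` applied to the
coefficients and `q` replaced by `q²`, so `P_{N+1} = P_1 · (φ P_N)(q²)`.

On the other side, Lucas' theorem for multinomial coefficients modulo 2 and
`d_t(k) = (k mod 2) + t · d_t(⌊k/2⌋)` split the summand attached to `k` into the summand attached
to its last binary digits `k mod 2` times `φ` of the summand attached to `⌊k/2⌋`. Hence the sums
over all `k` with every `k_i < 2^N` satisfy the same recursion in `N`. They start alike: a
`0/1`-vector has an odd multinomial coefficient only if at most one entry is `1`, which leaves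
exactly the terms of the first factor. Finally, the coefficient of `q^n` with `n < 2^N` only
involves vectors with `k_i ≤ n`.
-/

open MvPolynomial

open Finset

theorem binaryWeight_eq (t k : ℕ) : binaryWeight t k = k % 2 + t * binaryWeight t (k / 2) := by
  cases k with
  | zero => simp [binaryWeight]
  | succ m => rw [binaryWeight]

theorem binaryWeight_of_lt_two {t k : ℕ} (hk : k < 2) : binaryWeight t k = k := by
  rw [binaryWeight_eq, Nat.div_eq_of_lt hk, Nat.mod_eq_of_lt hk]
  simp [binaryWeight]

namespace Nat

variable {ι : Type*} {p : ℕ}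

theorem Prime.dvd_multinomial (hp : p.Prime) {s : Finset ι} {f : ι → ℕ}
    (hf : ∀ i ∈ s, f i < p) (hs : p ≤ ∑ i ∈ s, f i) : p ∣ multinomial s f := by
  induction s using Finset.cons_induction with
  | empty => exact absurd hs (by simpa using hp.ne_zero)
  | cons a s ha ih =>
    rw [multinomial_cons]
    rw [sum_cons] at hs
    by_cases h : p ≤ ∑ i ∈ s, f i
    · exact dvd_mul_of_dvd_right (ih (fun i hi => hf i (mem_cons_of_mem hi)) h) _
    · exact dvd_mul_of_dvd_left (hp.dvd_choose_add (hf a (mem_cons_self a s)) (by omega) hs) _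

theorem sum_mod_add_mul_sum_div (s : Finset ι) (f : ι → ℕ) (p : ℕ) :
    ∑ i ∈ s, f i % p + p * ∑ i ∈ s, f i / p = ∑ i ∈ s, f i := by
  rw [mul_sum, ← sum_add_distrib]
  exact sum_congr rfl fun i _ => mod_add_div (f i) p

theorem multinomial_modEq_mod_mul_div [Fact p.Prime] (s : Finset ι) (k : ι → ℕ) :
    multinomial s k ≡ multinomial s (fun i => k i % p) * multinomial s (fun i => k i / p)
      [MOD p] := by
  have hp : p.Prime := Fact.out
  induction s using Finset.cons_induction with
  | empty => simp [Nat.ModEq]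
  | cons a s ha ih =>
    simp only [multinomial_cons]
    set r := ∑ i ∈ s, k i % p
    set u := k a % p + r
    by_cases hr : p ≤ r
    · have h0 : (multinomial s (fun i => k i % p) : ZMod p) = 0 :=
        (ZMod.natCast_eq_zero_iff _ _).2 (hp.dvd_multinomial (fun i _ => mod_lt _ hp.pos) hr)
      rw [← ZMod.natCast_eq_natCast_iff] at ih ⊢
      push_cast at ih ⊢
      rw [ih, h0]
      ring
    have hsplit : k a + ∑ i ∈ s, k i = u + p * (k a / p + ∑ i ∈ s, k i / p) := by
      have := sum_mod_add_mul_sum_div s k p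
      have := mod_add_div (k a) p
      simp only [u, r]
      linarith
    have hdiv : (k a + ∑ i ∈ s, k i) / p = u / p + (k a / p + ∑ i ∈ s, k i / p) := by
      rw [hsplit, add_mul_div_left _ _ hp.pos]
    have hmod : (k a + ∑ i ∈ s, k i) % p = u % p := by
      rw [hsplit, add_mul_mod_self_left]
    have hlucas := (Choose.choose_modEq_choose_mod_mul_choose_div_nat (p := p)
      (n := k a + ∑ i ∈ s, k i) (k := k a)).mul ih
    rw [hdiv, hmod] at hlucas
    refine hlucas.trans ?_
    -- `p ≤ u` means that adding the last digits carries; then both binomial factors vanish.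
    by_cases hu : u < p
    · rw [mod_eq_of_lt hu, div_eq_of_lt hu, zero_add]
      exact congrArg (· % p) (by ring)
    · have hka : k a % p < p := mod_lt _ hp.pos
      have h1 : choose (u % p) (k a % p) = 0 := by
        apply choose_eq_zero_of_lt
        rw [mod_eq_sub_mod (by omega), mod_eq_of_lt (by omega)]
        omega
      have h2 : choose u (k a % p) ≡ 0 [MOD p] :=
        (modEq_zero_iff_dvd).2 (hp.dvd_choose_add hka (by omega) (by omega))
      rw [h1]
      simpa using ((h2.mul_right _).mul_right _).symm

theorem multinomial_mod_two (s : Finset ι) (k : ι → ℕ) :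
    multinomial s k % 2 =
      multinomial s (fun i => k i % 2) % 2 * (multinomial s (fun i => k i / 2) % 2) := by
  have : Fact (Nat.Prime 2) := ⟨Nat.prime_two⟩
  rw [multinomial_modEq_mod_mul_div (p := 2) s k, Nat.mul_mod]
  rcases mod_two_eq_zero_or_one (multinomial s fun i => k i % 2) with h | h <;>
    rcases mod_two_eq_zero_or_one (multinomial s fun i => k i / 2) with h' | h' <;>
    simp [h, h']

end Nat

section WeightedSums

variable {ι : Type*} [Fintype ι]

theorem eq_zero_or_eq_single_of_sum_le_one [DecidableEq ι] {k : ι → ℕ} (h : ∑ i, k i ≤ 1) :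
    k = 0 ∨ ∃ i, k = Pi.single i 1 := by
  by_cases! h0 : ∀ i, k i = 0
  · exact .inl (funext h0)
  obtain ⟨i, hi⟩ := h0
  have hk := sum_le_one_iff.1 h
  refine .inr ⟨i, funext fun j => ?_⟩
  by_cases hj : j = i
  · subst hj; simp [(hk j j (mem_univ _) (mem_univ _) hi hi).2]
  · simp only [Pi.single_apply, hj, if_false]
    by_contra hkj
    exact hj (hk j i (mem_univ _) (mem_univ _) hkj hi).1

theorem sum_mul_eq_sum_mul_mod_two_add (d k : ι → ℕ) :
    ∑ i, d i * k i = ∑ i, d i * (k i % 2) + 2 * ∑ i, d i * (k i / 2) := by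
  rw [mul_sum, ← sum_add_distrib]
  refine sum_congr rfl fun i _ => ?_
  conv_lhs => rw [← Nat.mod_add_div (k i) 2]
  ring

theorem le_sum_mul_of_pos {d : ι → ℕ} (hd : ∀ i, 0 < d i) (k : ι → ℕ) (i : ι) :
    k i ≤ ∑ j, d j * k j :=
  (Nat.le_mul_of_pos_left _ (hd i)).trans
    (single_le_sum (f := fun j => d j * k j) (fun _ _ => Nat.zero_le _) (mem_univ i))

end WeightedSums

namespace BinaryMultinomial

variable {ι R S : Type*} [CommSemiring R] [CommSemiring S]

noncomputable def powSubst (T : ι → ℕ) : MvPolynomial ι R →+* MvPolynomial ι R :=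
  (aeval fun i => X i ^ T i).toRingHom

theorem powSubst_X_pow (T : ι → ℕ) (i : ι) (e : ℕ) :
    powSubst (R := R) T (X i ^ e) = X i ^ (T i * e) := by
  simp [powSubst, pow_mul]

noncomputable def doubling (φ : S →+* S) : Polynomial S →+* Polynomial S :=
  (Polynomial.expand S 2 : Polynomial S →+* Polynomial S).comp (Polynomial.mapRingHom φ)

theorem doubling_C_mul_X_pow (φ : S →+* S) (a : S) (n : ℕ) :
    doubling φ (Polynomial.C a * Polynomial.X ^ n) =
      Polynomial.C (φ a) * Polynomial.X ^ (2 * n) := by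
  simp [doubling, pow_mul]

variable [Fintype ι] (T d : ι → ℕ)

noncomputable def summand (k : ι → ℕ) : MvPolynomial ι R :=
  ((Nat.multinomial univ k % 2 : ℕ) : MvPolynomial ι R) * ∏ i, X i ^ binaryWeight (T i) (k i)

noncomputable def factor (j : ℕ) : Polynomial (MvPolynomial ι R) :=
  1 + ∑ i, Polynomial.C (X i ^ T i ^ j) * Polynomial.X ^ (d i * 2 ^ j)

theorem summand_eq_mul (k : ι → ℕ) :
    summand (R := R) T k =
      summand T (fun i => k i % 2) * powSubst T (summand T (fun i => k i / 2)) := by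
  have hX : ∏ i, (X i : MvPolynomial ι R) ^ binaryWeight (T i) (k i) =
      (∏ i, X i ^ binaryWeight (T i) (k i % 2)) *
        powSubst T (∏ i, X i ^ binaryWeight (T i) (k i / 2)) := by
    simp only [map_prod, powSubst_X_pow, ← prod_mul_distrib, ← pow_add,
      binaryWeight_of_lt_two (Nat.mod_lt _ two_pos), ← binaryWeight_eq]
  rw [summand, summand, summand, map_mul, map_natCast, Nat.multinomial_mod_two, hX]
  push_cast
  ring

theorem summand_zero : summand (R := R) T 0 = 1 := by
  simp [summand, Nat.multinomial, binaryWeight]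

theorem summand_eq_zero {k : ι → ℕ} (hk : ∀ i, k i < 2) (h : 2 ≤ ∑ i, k i) :
    summand (R := R) T k = 0 := by
  obtain ⟨m, hm⟩ := Nat.prime_two.dvd_multinomial (s := univ) (fun i _ => hk i) h
  simp [summand, hm]

theorem doubling_factor (j : ℕ) :
    doubling (powSubst T) (factor (R := R) T d j) = factor T d (j + 1) := by
  simp only [factor, map_add, map_one, map_sum, doubling_C_mul_X_pow, powSubst_X_pow]
  congr! 3 with i
  · rw [pow_succ']
  · rw [pow_succ', mul_left_comm]

theorem coe_prod_factor (N : ℕ) :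
    ((∏ j ∈ range N, factor (R := R) T d j : Polynomial _) : PowerSeries (MvPolynomial ι R)) =
      ∏ j ∈ range N, (1 + ∑ i, PowerSeries.C (X i ^ T i ^ j) * PowerSeries.X ^ (d i * 2 ^ j)) := by
  rw [← Polynomial.coeToPowerSeries.ringHom_apply, map_prod]
  refine prod_congr rfl fun j _ => ?_
  simp only [factor, map_add, map_one, map_sum, map_mul, map_pow,
    Polynomial.coeToPowerSeries.ringHom_apply, Polynomial.coe_C, Polynomial.coe_X]

variable [DecidableEq ι]

theorem summand_single (i : ι) : summand (R := R) T (Pi.single i 1) = X i := by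
  rw [summand, Nat.multinomial_single,
    Fintype.prod_eq_single i fun j hj => by simp [hj, binaryWeight]]
  simp [binaryWeight_of_lt_two]

noncomputable def partialSum (N : ℕ) : Polynomial (MvPolynomial ι R) :=
  ∑ k ∈ Fintype.piFinset fun _ => range (2 ^ N),
    Polynomial.C (summand T k) * Polynomial.X ^ (∑ i, d i * k i)

theorem factor_zero_eq_partialSum_one : factor (R := R) T d 0 = partialSum T d 1 := by
  have hsub : insert 0 (univ.image fun i => Pi.single i 1) ⊆
      Fintype.piFinset fun _ : ι => range (2 ^ 1) := by
    intro k hk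
    simp only [mem_insert, mem_image, mem_univ, true_and] at hk
    simp only [Fintype.mem_piFinset, mem_range]
    rcases hk with rfl | ⟨i, rfl⟩
    · simp
    · intro j; simp only [Pi.single_apply]; split <;> omega
  rw [partialSum, ← sum_subset hsub, sum_insert, sum_image]
  · simp [factor, summand_zero, summand_single, Pi.single_apply]
  · exact fun i _ j _ h => by simpa [Pi.single_apply] using congrFun h i
  · simpa [_root_.funext_iff] using fun i => ⟨i, by simp⟩
  · intro k hk hk'
    simp only [mem_insert, mem_image, mem_univ, true_and, not_or, not_exists] at hk'
    simp only [Fintype.mem_piFinset, mem_range, pow_one] at hk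
    rw [summand_eq_zero T hk, map_zero, zero_mul]
    by_contra! h
    rcases eq_zero_or_eq_single_of_sum_le_one (Nat.le_of_lt_succ h) with h0 | ⟨i, hi⟩
    · exact hk'.1 h0
    · exact hk'.2 i hi.symm

theorem partialSum_succ (N : ℕ) :
    partialSum (R := R) T d (N + 1) =
      partialSum T d 1 * doubling (powSubst T) (partialSum T d N) := by
  simp only [partialSum, map_sum, doubling_C_mul_X_pow, sum_mul_sum, ← sum_product']
  refine sum_nbij' (fun k => (fun i => k i % 2, fun i => k i / 2))
    (fun ek i => ek.1 i + 2 * ek.2 i) ?_ ?_ ?_ ?_ ?_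
  · intro k hk
    simp only [Fintype.mem_piFinset, mem_range, mem_product, pow_succ] at hk ⊢
    exact ⟨fun i => Nat.mod_lt _ two_pos, fun i => by have := hk i; omega⟩
  · intro ek hek
    simp only [Fintype.mem_piFinset, mem_range, mem_product, pow_succ] at hek ⊢
    exact fun i => by have := hek.1 i; have := hek.2 i; omega
  · intro k _
    funext i
    exact Nat.mod_add_div (k i) 2
  · intro ek hek
    simp only [Fintype.mem_piFinset, mem_range, mem_product, pow_one] at hek
    ext i <;> dsimp only <;> have := hek.1 i <;> omega
  · intro k _
    dsimp only
    rw [summand_eq_mul T k, sum_mul_eq_sum_mul_mod_two_add d k, map_mul, pow_add]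
    ring

theorem prod_factor_eq_partialSum (N : ℕ) :
    ∏ j ∈ range N, factor (R := R) T d j = partialSum T d N := by
  induction N with
  | zero => simp [partialSum, ← Pi.zero_def, summand_zero]
  | succ N ih =>
    rw [partialSum_succ, ← factor_zero_eq_partialSum_one, ← ih, map_prod, prod_range_succ',
      mul_comm]
    simp only [doubling_factor]

theorem coeff_partialSum (hd : ∀ i, 0 < d i) {n N : ℕ} (hn : n < 2 ^ N) :
    (partialSum (R := R) T d N).coeff n =
      ∑ k ∈ (Fintype.piFinset fun _ => range (n + 1)).filter (fun k => ∑ i, d i * k i = n),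
        summand T k := by
  simp only [partialSum, Polynomial.finsetSum_coeff, Polynomial.coeff_C_mul_X_pow]
  rw [← sum_filter]
  congr 1
  ext k
  simp only [mem_filter, Fintype.mem_piFinset, mem_range]
  constructor
  · rintro ⟨-, rfl⟩
    exact ⟨fun i => Nat.lt_succ_of_le (le_sum_mul_of_pos hd k i), rfl⟩
  · rintro ⟨-, rfl⟩
    exact ⟨fun i => (le_sum_mul_of_pos hd k i).trans_lt hn, rfl⟩

end BinaryMultinomial

theorem omega_binary_multinomial_formula_general (lam : ℕ)
    (T : Fin lam → ℕ)
    (w : ℕ → MvPolynomial (Fin lam) ℤ)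
    (hw : ∀ n N : ℕ, n < 2 ^ N →
      PowerSeries.coeff (R := MvPolynomial (Fin lam) ℤ) n
        (∏ j ∈ Finset.range N,
          (1 + ∑ i : Fin lam,
            PowerSeries.C (R := MvPolynomial (Fin lam) ℤ)
                ((X i : MvPolynomial (Fin lam) ℤ) ^ T i ^ j) *
              PowerSeries.X ^ ((i.1 + 1) * 2 ^ j))) = w (n + 1)) :
    ∀ n : ℕ,
      w (n + 1) =
        ∑ k ∈ (Fintype.piFinset fun _ : Fin lam => Finset.range (n + 1)).filter
            (fun k => ∑ i, (i.1 + 1) * k i = n),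
          ((Nat.multinomial Finset.univ k % 2 : ℕ) : MvPolynomial (Fin lam) ℤ) *
            ∏ i, X i ^ binaryWeight (T i) (k i) := by
  intro n
  have hn := n.lt_two_pow_self
  calc w (n + 1)
      = (BinaryMultinomial.partialSum (R := ℤ) T (fun i : Fin lam => i.1 + 1) n).coeff n := by
        rw [← hw n n hn, ← BinaryMultinomial.prod_factor_eq_partialSum, ← Polynomial.coeff_coe,
          BinaryMultinomial.coe_prod_factor]
    _ = _ := BinaryMultinomial.coeff_partialSum T _ (fun i => i.1.succ_pos) hn

/-- Explicit formula for the `λ`-variable polynomials `ω_{2,T}^λ`, characterized by the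
generating function
`∑_{n≥0} ω_{2,T}^λ(n+1; Z) q^n = ∏_{j≥0} (1 + z₁^{t₁^j} q^{2^j} + ⋯ + z_λ^{t_λ^j} q^{λ 2^j})`
(rendered coefficientwise via stabilized partial products): for all `n ≥ 0`,
`ω_{2,T}^λ(n+1; Z) = ∑_{k₁+2k₂+⋯+λk_λ=n} (multinomial(k₁,…,k_λ) mod 2) · z₁^{d_{t₁}(k₁)} ⋯ z_λ^{d_{t_λ}(k_λ)}`. -/
theorem omega_binary_multinomial_formula (lam : ℕ) (hlam : 1 ≤ lam)
    (T : Fin lam → ℕ) (hT : ∀ i, 1 ≤ T i)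
    (w : ℕ → MvPolynomial (Fin lam) ℤ)
    (hw : ∀ n N : ℕ, n < 2 ^ N →
      PowerSeries.coeff (R := MvPolynomial (Fin lam) ℤ) n
        (∏ j ∈ Finset.range N,
          (1 + ∑ i : Fin lam,
            PowerSeries.C (R := MvPolynomial (Fin lam) ℤ)
                ((X i : MvPolynomial (Fin lam) ℤ) ^ T i ^ j) *
              PowerSeries.X ^ ((i.1 + 1) * 2 ^ j))) = w (n + 1)) :
    ∀ n : ℕ,
      w (n + 1) =
        ∑ k ∈ (Fintype.piFinset fun _ : Fin lam => Finset.range (n + 1)).filter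
            (fun k => ∑ i, (i.1 + 1) * k i = n),
          ((Nat.multinomial Finset.univ k % 2 : ℕ) : MvPolynomial (Fin lam) ℤ) *
            ∏ i, X i ^ binaryWeight (T i) (k i) :=
  omega_binary_multinomial_formula_general lam T w hw
end

section
/- Let b ≥ 2, Λ = (b) (i.e., ρ = 1, λ = b), ℓ ≥ 1 and n ≥ 1. Then for all j with (b^ℓ-1)/(b-1) ≤ j ≤ b^ℓ - 1, Ω_{b,T}^{(b)}(n·b^ℓ + j; Z) = Ω_{b,T}^{(b)}(n; Z^{T^ℓ}) · Ω_{b,T}^{(b)}(j; Z), where Z = (z₁,...,z_b), T = (t₁,...,t_b), and Z^{T^ℓ} = (z₁^{t₁^ℓ},...,z_b^{t_b^ℓ}). -/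
/-!
The first `l` factors form a polynomial `P_l` of degree at most `b (b^l - 1)/(b - 1)`, and the
next `n` factors are the product `P_n` with `q ↦ q^{b^l}` and `Z ↦ Z^{T^l}`. So the coefficient
of `q^{n b^l + j}` in `P_{l+n}` is a sum over `k ≤ n` of
`[q^{(n-k) b^l + j}] P_l · [q^k] P_n(Z^{T^l})`, and the lower bound on `j` puts every term with
`k < n` beyond the degree of `P_l`.
-/

open MvPolynomial

open Polynomial in
theorem Polynomial.coeff_mul_expand_of_natDegree_lt {R : Type*} [CommSemiring R]
    (p q : R[X]) {m n j : ℕ} (hm : 0 < m) (hj : j < m) (hp : p.natDegree < m + j) :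
    (p * expand R m q).coeff (n * m + j) = p.coeff j * q.coeff n := by
  rw [coeff_mul, Finset.sum_eq_single (j, n * m), coeff_expand_mul hm]
  · rintro ⟨a, c⟩ hac hne
    rw [Finset.HasAntidiagonal.mem_antidiagonal] at hac
    rw [coeff_expand hm]
    split_ifs with hdvd
    · obtain ⟨k, rfl⟩ := hdvd
      have hkn : k < n := by
        by_contra! hnk
        obtain rfl | hlt := hnk.eq_or_lt
        · exact hne (Prod.ext (by simp only at hac ⊢; lia) (mul_comm _ _))
        · nlinarith [Nat.mul_le_mul_left m hlt]
      rw [coeff_eq_zero_of_natDegree_lt (by simp only at hac ⊢; nlinarith), zero_mul]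
    · rw [mul_zero]
  · exact fun h => absurd (Finset.HasAntidiagonal.mem_antidiagonal.mpr (add_comm _ _)) h

section OmegaProduct

variable (R : Type*) [CommSemiring R] (b : ℕ) (T : Fin b → ℕ)

noncomputable def omegaFactor (j : ℕ) : Polynomial (MvPolynomial (Fin b) R) :=
  1 + ∑ i : Fin b, Polynomial.C (X i ^ T i ^ j) * Polynomial.X ^ ((i.1 + 1) * b ^ j)

noncomputable def omegaPartialProduct (N : ℕ) : Polynomial (MvPolynomial (Fin b) R) :=
  ∏ j ∈ Finset.range N, omegaFactor R b T j

theorem coe_omegaPartialProduct (N : ℕ) :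
    (omegaPartialProduct R b T N : PowerSeries (MvPolynomial (Fin b) R)) =
      ∏ j ∈ Finset.range N,
        (1 + ∑ i : Fin b,
          PowerSeries.C ((X i : MvPolynomial (Fin b) R) ^ T i ^ j) *
            PowerSeries.X ^ ((i.1 + 1) * b ^ j)) := by
  simp only [omegaPartialProduct, omegaFactor, ← Polynomial.coeToPowerSeries.ringHom_apply,
    map_prod, map_add, map_one, map_sum, map_mul, map_pow]
  simp

theorem natDegree_omegaFactor_le (j : ℕ) : (omegaFactor R b T j).natDegree ≤ b * b ^ j := by
  refine Polynomial.natDegree_add_le_of_degree_le (by simp) ?_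
  refine Polynomial.natDegree_sum_le_of_forall_le _ _ fun i _ => ?_
  exact (Polynomial.natDegree_C_mul_X_pow_le _ _).trans (Nat.mul_le_mul_right _ i.2)

theorem natDegree_omegaPartialProduct_le (N : ℕ) :
    (omegaPartialProduct R b T N).natDegree ≤ b * ∑ j ∈ Finset.range N, b ^ j := by
  rw [Finset.mul_sum]
  exact (Polynomial.natDegree_prod_le _ _).trans
    (Finset.sum_le_sum fun j _ => natDegree_omegaFactor_le R b T j)

theorem omegaFactor_add (l j : ℕ) :
    omegaFactor R b T (l + j) =
      Polynomial.expand _ (b ^ l)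
        ((omegaFactor R b T j).map (aeval fun v => X v ^ T v ^ l).toRingHom) := by
  simp [omegaFactor, Polynomial.map_sum, pow_add, ← pow_mul, mul_left_comm]

theorem omegaPartialProduct_add (l n : ℕ) :
    omegaPartialProduct R b T (l + n) =
      omegaPartialProduct R b T l *
        Polynomial.expand _ (b ^ l)
          ((omegaPartialProduct R b T n).map (aeval fun v => X v ^ T v ^ l).toRingHom) := by
  simp [omegaPartialProduct, Finset.prod_range_add, omegaFactor_add, Polynomial.map_prod]

end OmegaProduct

theorem Omega_single_color_factorization_general (b : ℕ) (hb : 2 ≤ b)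
    (T : Fin b → ℕ)
    (Om : ℕ → MvPolynomial (Fin b) ℤ)
    (hOm : ∀ n N : ℕ, n < b ^ N →
      PowerSeries.coeff (R := MvPolynomial (Fin b) ℤ) n
        (∏ j ∈ Finset.range N,
          (1 + ∑ i : Fin b,
            PowerSeries.C (R := MvPolynomial (Fin b) ℤ)
                ((X i : MvPolynomial (Fin b) ℤ) ^ T i ^ j) *
              PowerSeries.X ^ ((i.1 + 1) * b ^ j))) = Om n)
    (l n : ℕ) :
    ∀ j : ℕ, (b ^ l - 1) / (b - 1) ≤ j → j ≤ b ^ l - 1 →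
      Om (n * b ^ l + j) =
        aeval (fun v : Fin b => (X v : MvPolynomial (Fin b) ℤ) ^ T v ^ l) (Om n) *
          Om j := by
  intro j hj_ge hj_le
  have coeff_eq_Om (k N : ℕ) (hk : k < b ^ N) :
      (omegaPartialProduct ℤ b T N).coeff k = Om k := by
    rw [← hOm k N hk, ← coe_omegaPartialProduct, Polynomial.coeff_coe]
  have hbl : 0 < b ^ l := by positivity
  have hjl : j < b ^ l := by omega
  have hdeg : (omegaPartialProduct ℤ b T l).natDegree < b ^ l + j := by
    have hgeom :
        b * (∑ i ∈ Finset.range l, b ^ i) + 1 = b ^ l + ∑ i ∈ Finset.range l, b ^ i :=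
      (geom_sum_succ ..).symm.trans (geom_sum_succ' ..)
    rw [← Nat.geomSum_eq hb] at hj_ge
    have := natDegree_omegaPartialProduct_le ℤ b T l
    omega
  have hn_lt : n < b ^ n := Nat.lt_pow_self (by omega)
  have hlt : n * b ^ l + j < b ^ (l + n) := by
    rw [pow_add]
    nlinarith
  rw [← coeff_eq_Om _ _ hlt, omegaPartialProduct_add,
    Polynomial.coeff_mul_expand_of_natDegree_lt _ _ hbl hjl hdeg, Polynomial.coeff_map,
    coeff_eq_Om n n hn_lt, coeff_eq_Om j l hjl, mul_comm]
  rfl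

/-- Factorization for `ρ = 1`, `Λ = (b)`: the `b`-variable polynomials
`Ω_{b,T}^{(b)}(n; Z)`, characterized by
`∑_{n≥0} Ω(n; Z) q^n = ∏_{j≥0} (1 + z₁^{t₁^j} q^{b^j} + ⋯ + z_b^{t_b^j} q^{b·b^j})`
(rendered coefficientwise via stabilized partial products), satisfy
`Ω(n b^ℓ + j; Z) = Ω(n; Z^{T^ℓ}) · Ω(j; Z)` for all `(b^ℓ-1)/(b-1) ≤ j ≤ b^ℓ - 1`,
where `Z^{T^ℓ} = (z₁^{t₁^ℓ}, …, z_b^{t_b^ℓ})`. -/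
theorem Omega_single_color_factorization (b : ℕ) (hb : 2 ≤ b)
    (T : Fin b → ℕ) (hT : ∀ i, 1 ≤ T i)
    (Om : ℕ → MvPolynomial (Fin b) ℤ)
    (hOm : ∀ n N : ℕ, n < b ^ N →
      PowerSeries.coeff (R := MvPolynomial (Fin b) ℤ) n
        (∏ j ∈ Finset.range N,
          (1 + ∑ i : Fin b,
            PowerSeries.C (R := MvPolynomial (Fin b) ℤ)
                ((X i : MvPolynomial (Fin b) ℤ) ^ T i ^ j) *
              PowerSeries.X ^ ((i.1 + 1) * b ^ j))) = Om n)
    (l n : ℕ) (hl : 1 ≤ l) (hn : 1 ≤ n) :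
    ∀ j : ℕ, (b ^ l - 1) / (b - 1) ≤ j → j ≤ b ^ l - 1 →
      Om (n * b ^ l + j) =
        aeval (fun v : Fin b => (X v : MvPolynomial (Fin b) ℤ) ^ T v ^ l) (Om n) *
          Om j :=
  Omega_single_color_factorization_general b hb T Om hOm l n
end
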